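/- Let $M$ graphs have vertex feature vectors collected as the columns of $\Phi \in \mathbb{R}^{m \times N}$, where $N = \sum_{g=1}^M n_g$ and the columns are grouped consecutively by graph. Let $K = \Phi^\top\Phi$, let $u_1,\ldots,u_P$ be orthonormal eigenvectors of $K$ with eigenvalues $\lambda_1,\ldots,\lambda_P > 0$ with $P = \mathrm{rank}(K)$, let $Q = [\lambda_1^{1/2}u_1,\ldots,\lambda_P^{1/2}u_P] \in \mathbb{R}^{N \times P}$, and for each graph $g$ let $Q_g \in \mathbb{R}^{n_g \times P}$ be the block of rows of $Q$ corresponding to graph $g$ and $\Phi_g$ the corresponding block of columns of $\Phi$. Let $L_g$ be symmetric positive definite $n_g \times n_g$ matrices and $\gamma > 0$, and set $S_g = \Phi_g L_g^{-1}\Phi_g^\top + \gamma I_m$ and $\bar S_g = Q_g^\top L_g^{-1} Q_g + \gamma I_P$. Then for every pair of graphs $i, j$: $\det\big((\tfrac{1}{2}S_i^{-1} + \tfrac{1}{2}S_j^{-1})^{-1}\big)^{1/2} \big/ \big(\det(S_i)^{1/4}\det(S_j)^{1/4}\big) = \det\big((\tfrac{1}{2}\bar S_i^{-1} + \tfrac{1}{2}\bar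 S_j^{-1})^{-1}\big)^{1/2} \big/ \big(\det(\bar S_i)^{1/4}\det(\bar S_j)^{1/4}\big)$. -/

import Mathlib

open Matrix

/-- The Laplacian graph kernel value between two (positive definite) matrices. -/
noncomputable def lgKernel {k : Type*} [Fintype k] [DecidableEq k]
    (A B : Matrix k k ℝ) : ℝ :=
  (((1 / 2 : ℝ) • A⁻¹ + (1 / 2 : ℝ) • B⁻¹)⁻¹).det ^ ((1 : ℝ) / 2) /
    (A.det ^ ((1 : ℝ) / 4) * B.det ^ ((1 : ℝ) / 4))

/-!
Let `U = [u₁ … u_P]` and `D = diag(√λ)`. The rows of `Φ` lie in the column space of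
`ΦᵀΦ = K`, which has dimension `P` and contains the `u_p`, so `Φ U Uᵀ = Φ`. Hence
`Ξ = Φ U D⁻¹` has orthonormal columns and `Φ = Ξ Qᵀ`, so `Φ_g = Ξ Q_gᵀ` and
`S_g = Ξ S̄_g Ξᵀ + γ (1 - Ξ Ξᵀ)`: in an orthonormal basis adapted to the column space of `Ξ`,
`S_g` is block diagonal with blocks `S̄_g` and `γ I`. Inverses, averages and determinants
respect this block form, and the `γ I` block scales both numerator and denominator of the
kernel by the same power of `γ`.
-/

theorem Real.mul_rpow_half_div_mul_rpow_quarter {r a x y : ℝ} (hr : 0 < r) (ha : 0 ≤ a)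
    (hx : 0 ≤ x) (hy : 0 ≤ y) :
    (r * a) ^ ((1 : ℝ) / 2) / ((r * x) ^ ((1 : ℝ) / 4) * (r * y) ^ ((1 : ℝ) / 4)) =
      a ^ ((1 : ℝ) / 2) / (x ^ ((1 : ℝ) / 4) * y ^ ((1 : ℝ) / 4)) := by
  have hsq : r ^ ((1 : ℝ) / 4) * r ^ ((1 : ℝ) / 4) = r ^ ((1 : ℝ) / 2) := by
    rw [← Real.rpow_add hr]; norm_num
  rw [Real.mul_rpow hr.le ha, Real.mul_rpow hr.le hx, Real.mul_rpow hr.le hy,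
    mul_mul_mul_comm, hsq, mul_div_mul_left _ _ (Real.rpow_pos_of_pos hr _).ne']

namespace Matrix

variable {ι κ : Type*} [Fintype κ] [DecidableEq ι]

/-- When `Ξᵀ * Ξ = 1`, the operator acting as `X` on the column space of `Ξ` (in the basis of
the columns of `Ξ`) and as `c` on its orthogonal complement. -/
def orthoExtend (Ξ : Matrix ι κ ℝ) (c : ℝ) (X : Matrix κ κ ℝ) : Matrix ι ι ℝ :=
  Ξ * X * Ξᵀ + c • (1 - Ξ * Ξᵀ)

theorem orthoExtend_add_smul_one [DecidableEq κ] (Ξ : Matrix ι κ ℝ) (c : ℝ)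
    (A : Matrix κ κ ℝ) :
    orthoExtend Ξ c (A + c • 1) = Ξ * A * Ξᵀ + c • 1 := by
  simp only [orthoExtend, Matrix.mul_add, Matrix.add_mul, Matrix.mul_smul, Matrix.smul_mul,
    Matrix.mul_one, smul_sub]
  abel

theorem orthoExtend_one [DecidableEq κ] (Ξ : Matrix ι κ ℝ) : orthoExtend Ξ 1 1 = 1 := by
  simp [orthoExtend]

theorem smul_orthoExtend_add_smul_orthoExtend (Ξ : Matrix ι κ ℝ) (a b c d : ℝ)
    (X Y : Matrix κ κ ℝ) :
    a • orthoExtend Ξ c X + b • orthoExtend Ξ d Y =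
      orthoExtend Ξ (a * c + b * d) (a • X + b • Y) := by
  simp only [orthoExtend, Matrix.mul_add, Matrix.add_mul, Matrix.mul_smul, Matrix.smul_mul]
  module

section
variable [Fintype ι] [DecidableEq κ] {Ξ : Matrix ι κ ℝ}

theorem orthoExtend_mul (hΞ : Ξᵀ * Ξ = 1) (c d : ℝ) (X Y : Matrix κ κ ℝ) :
    orthoExtend Ξ c X * orthoExtend Ξ d Y = orthoExtend Ξ (c * d) (X * Y) := by
  have hΞΞ : ∀ Z : Matrix κ ι ℝ, Ξᵀ * (Ξ * Z) = Z := fun Z => by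
    rw [← Matrix.mul_assoc, hΞ, Matrix.one_mul]
  simp only [orthoExtend, Matrix.mul_add, Matrix.add_mul, Matrix.mul_smul, Matrix.smul_mul,
    Matrix.mul_sub, Matrix.sub_mul, Matrix.mul_one, Matrix.one_mul, Matrix.mul_assoc, hΞΞ,
    smul_sub]
  module

theorem orthoExtend_inv (hΞ : Ξᵀ * Ξ = 1) {c : ℝ} (hc : c ≠ 0) {X : Matrix κ κ ℝ}
    (hX : IsUnit X) : (orthoExtend Ξ c X)⁻¹ = orthoExtend Ξ c⁻¹ X⁻¹ :=
  inv_eq_right_inv <| by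
    rw [orthoExtend_mul hΞ, mul_inv_cancel₀ hc,
      mul_nonsing_inv _ ((isUnit_iff_isUnit_det X).mp hX), orthoExtend_one]

theorem det_orthoExtend_mul_pow (hΞ : Ξᵀ * Ξ = 1) {c : ℝ} (hc : c ≠ 0) (X : Matrix κ κ ℝ) :
    (orthoExtend Ξ c X).det * c ^ Fintype.card κ = c ^ Fintype.card ι * X.det := by
  have hfactor : orthoExtend Ξ c X = c • (1 + Ξ * (c⁻¹ • X - 1) * Ξᵀ) := by
    simp only [orthoExtend, smul_add, Matrix.mul_sub, Matrix.sub_mul, Matrix.mul_smul,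
      Matrix.smul_mul, smul_sub, smul_smul, mul_inv_cancel₀ hc, one_smul, Matrix.mul_one]
    abel
  rw [hfactor, det_smul, det_one_add_mul_comm, ← Matrix.mul_assoc, hΞ, Matrix.one_mul,
    add_sub_cancel, det_smul, inv_pow]
  field_simp

theorem lgKernel_orthoExtend (hΞ : Ξᵀ * Ξ = 1) {c : ℝ} (hc : 0 < c) {X Y : Matrix κ κ ℝ}
    (hX : X.PosDef) (hY : Y.PosDef) :
    lgKernel (orthoExtend Ξ c X) (orthoExtend Ξ c Y) = lgKernel X Y := by
  set T := (1 / 2 : ℝ) • X⁻¹ + (1 / 2 : ℝ) • Y⁻¹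
  have hT : T.PosDef := (hX.inv.smul one_half_pos).add (hY.inv.smul one_half_pos)
  have hmid : (1 / 2 : ℝ) • (orthoExtend Ξ c X)⁻¹ + (1 / 2 : ℝ) • (orthoExtend Ξ c Y)⁻¹ =
      orthoExtend Ξ c⁻¹ T := by
    rw [orthoExtend_inv hΞ hc.ne' hX.isUnit, orthoExtend_inv hΞ hc.ne' hY.isUnit,
      smul_orthoExtend_add_smul_orthoExtend, ← add_mul, add_halves, one_mul]
  have hmid_inv : (orthoExtend Ξ c⁻¹ T)⁻¹ = orthoExtend Ξ c T⁻¹ := by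
    rw [orthoExtend_inv hΞ (inv_ne_zero hc.ne') hT.isUnit, inv_inv]
  have hdet : ∀ Z : Matrix κ κ ℝ,
      (orthoExtend Ξ c Z).det = c ^ Fintype.card ι / c ^ Fintype.card κ * Z.det := fun Z => by
    rw [div_mul_eq_mul_div, eq_div_iff (pow_pos hc _).ne', det_orthoExtend_mul_pow hΞ hc.ne']
  unfold lgKernel
  rw [hmid, hmid_inv, hdet, hdet, hdet]
  exact Real.mul_rpow_half_div_mul_rpow_quarter (by positivity) hT.inv.det_pos.le
    hX.det_pos.le hY.det_pos.le

end

theorem range_mulVecLin_mul_le {l m n R : Type*} [CommSemiring R] [Fintype m] [Fintype n]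
    (A : Matrix l m R) (B : Matrix m n R) :
    LinearMap.range (A * B).mulVecLin ≤ LinearMap.range A.mulVecLin := by
  rw [mulVecLin_mul]
  exact LinearMap.range_comp_le_range _ _

section
variable {m ι κ : Type*} [Fintype m] [Fintype ι] [Fintype κ] [DecidableEq κ]

theorem mul_transpose_mul_eq_of_range_le {A : Matrix ι m ℝ} {U : Matrix ι κ ℝ}
    (hU : Uᵀ * U = 1) (h : LinearMap.range A.mulVecLin ≤ LinearMap.range U.mulVecLin) :
    U * Uᵀ * A = A := by
  refine ext_iff_mulVec.mpr fun x => ?_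
  obtain ⟨y, hy⟩ := h ⟨x, rfl⟩
  rw [mulVecLin_apply, mulVecLin_apply] at hy
  rw [← mulVec_mulVec, ← hy, mulVec_mulVec, Matrix.mul_assoc, hU, Matrix.mul_one]

theorem range_transpose_le_of_eigenbasis {Φ : Matrix m ι ℝ} {U : Matrix ι κ ℝ}
    {lam : κ → ℝ} (hU : Uᵀ * U = 1) (heig : Φᵀ * Φ * U = U * diagonal lam)
    (hlam : ∀ i, lam i ≠ 0) (hrank : Fintype.card κ = (Φᵀ * Φ).rank) :
    LinearMap.range Φᵀ.mulVecLin ≤ LinearMap.range U.mulVecLin := by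
  have hU_eq : U = Φᵀ * (Φ * (U * diagonal lam⁻¹)) := by
    rw [← Matrix.mul_assoc, ← Matrix.mul_assoc, heig, Matrix.mul_assoc, diagonal_mul_diagonal]
    simp [hlam]
  have hle : LinearMap.range U.mulVecLin ≤ LinearMap.range Φᵀ.mulVecLin := by
    rw [hU_eq]
    exact range_mulVecLin_mul_le _ _
  have hrank_le : Φᵀ.rank ≤ U.rank :=
    calc Φᵀ.rank = Fintype.card κ := by rw [rank_transpose, hrank, rank_transpose_mul_self]
      _ = (Uᵀ * U).rank := by rw [hU, rank_one]
      _ ≤ U.rank := rank_mul_le_right _ _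
  exact (Submodule.eq_of_le_of_finrank_le hle hrank_le).ge

theorem exists_isometry_factor_of_eigenbasis {Φ : Matrix m ι ℝ} {U : Matrix ι κ ℝ}
    {lam : κ → ℝ} (hU : Uᵀ * U = 1) (heig : Φᵀ * Φ * U = U * diagonal lam)
    (hpos : ∀ i, 0 < lam i) (hrank : Fintype.card κ = (Φᵀ * Φ).rank) :
    ∃ Ξ : Matrix m κ ℝ, Ξᵀ * Ξ = 1 ∧ Φ = Ξ * (U * diagonal fun i => √(lam i))ᵀ := by
  have hproj : Φ * U * Uᵀ = Φ := by
    simpa only [Matrix.transpose_mul, Matrix.transpose_transpose, Matrix.mul_assoc] using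
      congrArg transpose (mul_transpose_mul_eq_of_range_le hU
        (range_transpose_le_of_eigenbasis hU heig (fun i => (hpos i).ne') hrank))
  set s : κ → ℝ := fun i => √(lam i)
  have hs : ∀ i, s i ≠ 0 := fun i => (Real.sqrt_pos.mpr (hpos i)).ne'
  refine ⟨Φ * U * diagonal s⁻¹, ?_, ?_⟩
  · calc (Φ * U * diagonal s⁻¹)ᵀ * (Φ * U * diagonal s⁻¹)
        = diagonal s⁻¹ * (Uᵀ * (Φᵀ * Φ * U)) * diagonal s⁻¹ := by
          simp only [Matrix.transpose_mul, diagonal_transpose, Matrix.mul_assoc]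
      _ = diagonal fun i => lam i / (s i * s i) := by
          rw [heig, ← Matrix.mul_assoc Uᵀ, hU, Matrix.one_mul, diagonal_mul_diagonal,
            diagonal_mul_diagonal]
          congr 1
          funext i
          simp only [Pi.inv_apply]
          field_simp
      _ = 1 := by
          rw [← diagonal_one]
          congr 1
          funext i
          rw [Real.mul_self_sqrt (hpos i).le, div_self (hpos i).ne']
  · rw [Matrix.transpose_mul, diagonal_transpose, Matrix.mul_assoc (Φ * U),
      ← Matrix.mul_assoc (diagonal _), diagonal_mul_diagonal]
    simp [hs, hproj]

end

end Matrix

theorem Matrix.PosDef.transpose_mul_inv_mul_add_smul_one {n κ : Type*} [Fintype n]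
    [DecidableEq n] [Fintype κ] [DecidableEq κ] {L : Matrix n n ℝ} (hL : L.PosDef)
    (Q : Matrix n κ ℝ) {γ : ℝ} (hγ : 0 < γ) : (Qᵀ * L⁻¹ * Q + γ • 1).PosDef := by
  have hQLQ := hL.inv.posSemidef.conjTranspose_mul_mul_same Q
  rw [conjTranspose_eq_transpose_of_trivial] at hQLQ
  exact PosDef.posSemidef_add hQLQ (PosDef.one.smul hγ)

/-- Linearization of the FLG kernel over a joint feature space of
`M` graphs: for each pair of graphs, the FLG kernel computed from the full
feature-space matrices `S_g = Φ_g L_g⁻¹ Φ_gᵀ + γI` equals the kernel computed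
from the projected matrices `S̄_g = Q_gᵀ L_g⁻¹ Q_g + γI`. -/
theorem flg_kernel_joint_basis_linearization {m M P : ℕ} (n : Fin M → ℕ)
    (Φ : Matrix (Fin m) ((g : Fin M) × Fin (n g)) ℝ)
    (K : Matrix ((g : Fin M) × Fin (n g)) ((g : Fin M) × Fin (n g)) ℝ)
    (hK : K = Φᵀ * Φ)
    (u : Fin P → (((g : Fin M) × Fin (n g)) → ℝ)) (lam : Fin P → ℝ)
    (huortho : ∀ i j, u i ⬝ᵥ u j = if i = j then (1 : ℝ) else 0)
    (heig : ∀ i, K.mulVec (u i) = lam i • u i)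
    (hpos : ∀ i, 0 < lam i)
    (hrank : P = K.rank)
    (Q : Matrix ((g : Fin M) × Fin (n g)) (Fin P) ℝ)
    (hQ : ∀ v i, Q v i = Real.sqrt (lam i) * u i v)
    (Φg : (g : Fin M) → Matrix (Fin m) (Fin (n g)) ℝ)
    (hΦg : ∀ g, Φg g = Φ.submatrix id (fun j => ⟨g, j⟩))
    (Qg : (g : Fin M) → Matrix (Fin (n g)) (Fin P) ℝ)
    (hQg : ∀ g, Qg g = Q.submatrix (fun j => ⟨g, j⟩) id)
    (L : (g : Fin M) → Matrix (Fin (n g)) (Fin (n g)) ℝ)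
    (hL : ∀ g, (L g).PosDef)
    (γ : ℝ) (hγ : 0 < γ)
    (S : (g : Fin M) → Matrix (Fin m) (Fin m) ℝ)
    (hS : ∀ g, S g = Φg g * (L g)⁻¹ * (Φg g)ᵀ + γ • (1 : Matrix (Fin m) (Fin m) ℝ))
    (Sbar : (g : Fin M) → Matrix (Fin P) (Fin P) ℝ)
    (hSbar : ∀ g, Sbar g = (Qg g)ᵀ * (L g)⁻¹ * Qg g + γ • (1 : Matrix (Fin P) (Fin P) ℝ)) :
    ∀ i j : Fin M, lgKernel (S i) (S j) = lgKernel (Sbar i) (Sbar j) := by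
  set U : Matrix _ (Fin P) ℝ := (of u)ᵀ
  have hU : Uᵀ * U = 1 := by
    ext p q
    simpa [U, mul_apply, one_apply, dotProduct] using huortho p q
  have hKU : Φᵀ * Φ * U = U * diagonal lam := by
    ext v p
    rw [mul_diagonal]
    simpa [U, ← hK, mul_apply, mulVec, dotProduct, mul_comm] using congrFun (heig p) v
  have hQU : Q = U * diagonal fun p => √(lam p) := by
    ext v p
    simp [U, hQ, mul_comm]
  obtain ⟨Ξ, hΞ, hΦ⟩ := exists_isometry_factor_of_eigenbasis hU hKU hpos
    (by rw [← hK, ← hrank, Fintype.card_fin])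
  have hΦg_eq : ∀ g, Φg g = Ξ * (Qg g)ᵀ := fun g => by
    rw [hΦg, hQg, hΦ, ← hQU, submatrix_mul _ _ _ id _ Function.bijective_id,
      transpose_submatrix, submatrix_id_id]
  have hS_eq : ∀ g, S g = orthoExtend Ξ γ (Sbar g) := fun g => by
    rw [hS, hSbar, orthoExtend_add_smul_one, hΦg_eq, Matrix.transpose_mul,
      Matrix.transpose_transpose]
    simp only [Matrix.mul_assoc]
  have hSbar_pos : ∀ g, (Sbar g).PosDef := fun g =>
    hSbar g ▸ (hL g).transpose_mul_inv_mul_add_smul_one (Qg g) hγ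
  intro i j
  rw [hS_eq, hS_eq]
  exact lgKernel_orthoExtend hΞ hγ (hSbar_pos i) (hSbar_pos j)
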